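/- Suppose B ≥ 2(1 − p − s)²/((p + s)(2 − p − s)) and η satisfies s/p ≤ η < (p + s)²(2 − p − s)/(2p(1 − p − s)²) + s/p. Then there is no Ψ in the interval [p + s, (p − s)B] such that Ψ·A₁(Ψ) = (ηp − s)·R(Ψ). -/
import Mathlib


/-- Requesters' share. -/
noncomputable def R (p s Ψ : ℝ) : ℝ := (1 - Ψ) * (1 - p - s)

/-- Agents' share in the high-benefit regime. -/
noncomputable def A₁ (p s Ψ : ℝ) : ℝ := ((2 * Ψ - p - s) * (p + s)) / 2 + Ψ * (1 - p - s)

theorem stmt_8 (p s B η : ℝ) (hs : 0 < s) (hsp : s < p) (hps : p + s < 1) (hB : 0 < B)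
    (hη₀ : s / p ≤ η) (hη₁ : η ≤ 1)
    (hBge : B ≥ 2 * (1 - p - s) ^ 2 / ((p + s) * (2 - p - s)))
    (hηhi : η < (p + s) ^ 2 * (2 - p - s) / (2 * p * (1 - p - s) ^ 2) + s / p) :
    ¬ ∃ Ψ ∈ Set.Icc (p + s) ((p - s) * B),
        Ψ * A₁ p s Ψ = (η * p - s) * R p s Ψ := by
  rintro ⟨Ψ, ⟨hΨ₁, hΨ₂⟩, heq⟩
  have hp : 0 < p := hs.trans hsp
  have hq : 0 < p + s := by linarith
  have h1q : 0 < 1 - p - s := by linarith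
  have h0 : s ≤ η * p := (div_le_iff₀ hp).mp hη₀
  have h2' : (η * p - s) / p < (p + s) ^ 2 * (2 - p - s) / (2 * p * (1 - p - s) ^ 2) := by
    calc (η * p - s) / p = η - s / p := by field_simp
    _ < (p + s) ^ 2 * (2 - p - s) / (2 * p * (1 - p - s) ^ 2) := by linarith
  have h3 : 2 * (η * p - s) * (1 - p - s) ^ 2 < (p + s) ^ 2 * (2 - p - s) := by
    have h := (div_lt_div_iff₀ hp (by positivity)).mp h2'
    nlinarith [h, hp]
  simp only [A₁, R] at heq
  nlinarith [heq, sq_nonneg (Ψ - (p + s)), mul_nonneg (sub_nonneg.mpr h0) (mul_nonneg h1q.le h1q.le),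
    mul_nonneg (sub_nonneg.mpr hΨ₁) hq.le, mul_nonneg (sub_nonneg.mpr hΨ₁) h1q.le,
    mul_nonneg (sub_nonneg.mpr h0) (mul_nonneg (sub_nonneg.mpr hΨ₁) h1q.le)]
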